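/- arXiv:2407.04313 — 4 statements merged into one kernel-verified Lean document; each statement's English description precedes it below -/
import Mathlib

section
/- Let φ ∈ C(ℝ,X) be comparable by character of recurrence with ψ ∈ C(ℝ,Y). If ψ is almost recurrent in the sense of Bebutov, then φ is almost recurrent in the sense of Bebutov. -/
open Filter Topology

/-- The Bebutov metric on `C(ℝ, X)`:
`d(φ₁,φ₂) = sup_{T>0} min ( max_{|t| ≤ T} ρ(φ₁(t), φ₂(t)), 1/T )`. -/
noncomputable def bebutovDist {X : Type*} [MetricSpace X] (φ ψ : C(ℝ, X)) : ℝ :=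
  ⨆ T : Set.Ioi (0 : ℝ),
    min (⨆ t : Set.Icc (-(T : ℝ)) (T : ℝ), dist (φ t.1) (ψ t.1)) (1 / (T : ℝ))

/-- The translate `φ^h` of `φ ∈ C(ℝ,X)`, given by `φ^h(t) = φ(t + h)`. -/
def timeShift {X : Type*} [MetricSpace X] (φ : C(ℝ, X)) (h : ℝ) : C(ℝ, X) :=
  ⟨fun t => φ (t + h), φ.continuous.comp (continuous_id.add continuous_const)⟩

/-- `𝔑_φ`: the family of sequences `{tₙ} ⊂ ℝ` with `φ^{tₙ} → φ` in `(C(ℝ,X),d)`. -/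
def NClass {X : Type*} [MetricSpace X] (φ : C(ℝ, X)) : Set (ℕ → ℝ) :=
  {t | Tendsto (fun n => bebutovDist (timeShift φ (t n)) φ) atTop (𝓝 0)}

/-- `𝔐_φ`: the family of sequences `{tₙ} ⊂ ℝ` such that `{φ^{tₙ}}` converges in
`(C(ℝ,X),d)`. -/
def MClass {X : Type*} [MetricSpace X] (φ : C(ℝ, X)) : Set (ℕ → ℝ) :=
  {t | ∃ ψ : C(ℝ, X), Tendsto (fun n => bebutovDist (timeShift φ (t n)) ψ) atTop (𝓝 0)}

/-- `𝔑^u_φ`: sequences in `𝔑_φ` with `φ^{s+tₙ} → φ^s` uniformly in `s ∈ ℝ`. -/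
def NuClass {X : Type*} [MetricSpace X] (φ : C(ℝ, X)) : Set (ℕ → ℝ) :=
  {t | t ∈ NClass φ ∧ ∀ ε > (0 : ℝ), ∃ N : ℕ, ∀ n ≥ N, ∀ s : ℝ,
    bebutovDist (timeShift φ (s + t n)) (timeShift φ s) < ε}

/-- `𝔐^u_φ`: sequences in `𝔐_φ` such that `{φ^{s+tₙ}}` converges uniformly in `s ∈ ℝ`. -/
def MuClass {X : Type*} [MetricSpace X] (φ : C(ℝ, X)) : Set (ℕ → ℝ) :=
  {t | t ∈ MClass φ ∧ ∃ ψ : ℝ → C(ℝ, X), ∀ ε > (0 : ℝ), ∃ N : ℕ, ∀ n ≥ N, ∀ s : ℝ,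
    bebutovDist (timeShift φ (s + t n)) (ψ s) < ε}

/-- A subset `S ⊆ ℝ` is relatively dense if some length `l > 0` interval always meets it. -/
def RelativelyDense (S : Set ℝ) : Prop :=
  ∃ l > (0 : ℝ), ∀ a : ℝ, ∃ τ ∈ S, τ ∈ Set.Icc a (a + l)

/-- `φ` is Poisson stable: for every `ε > 0` and `l > 0` there are `ε`-shifts `τ₊ > l`
and `τ₋ < −l`. -/
def PoissonStable {X : Type*} [MetricSpace X] (φ : C(ℝ, X)) : Prop :=
  ∀ ε > (0 : ℝ), ∀ l > (0 : ℝ),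
    (∃ τ : ℝ, l < τ ∧ bebutovDist (timeShift φ τ) φ < ε) ∧
    (∃ τ : ℝ, τ < -l ∧ bebutovDist (timeShift φ τ) φ < ε)

/-- `φ` is almost recurrent in the sense of Bebutov. -/
def AlmostRecurrent {X : Type*} [MetricSpace X] (φ : C(ℝ, X)) : Prop :=
  ∀ ε > (0 : ℝ), RelativelyDense {τ : ℝ | bebutovDist (timeShift φ τ) φ < ε}

/-- `τ` is an `ε`-almost period of `φ`: `ρ(φ(t+τ),φ(t)) < ε` for all `t`. -/
def IsAlmostPeriod {X : Type*} [MetricSpace X] (φ : C(ℝ, X)) (ε τ : ℝ) : Prop :=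
  ∀ t : ℝ, dist (φ (t + τ)) (φ t) < ε

/-- `φ` is Bohr almost periodic: its set of `ε`-almost periods is relatively dense for
every `ε > 0`. -/
def BohrAlmostPeriodic {X : Type*} [MetricSpace X] (φ : C(ℝ, X)) : Prop :=
  ∀ ε > (0 : ℝ), RelativelyDense {τ : ℝ | IsAlmostPeriod φ ε τ}

/-- `φ` is Lagrange stable: every sequence of translates has a subsequence converging in
the Bebutov metric (i.e. `{φ^h : h ∈ ℝ}` is relatively compact in `(C(ℝ,X),d)`). -/
def LagrangeStable {X : Type*} [MetricSpace X] (φ : C(ℝ, X)) : Prop :=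
  ∀ h : ℕ → ℝ, ∃ (k : ℕ → ℕ) (ψ : C(ℝ, X)), StrictMono k ∧
    Tendsto (fun n => bebutovDist (timeShift φ (h (k n))) ψ) atTop (𝓝 0)

/-- `φ` is Birkhoff recurrent: almost recurrent and Lagrange stable. -/
def BirkhoffRecurrent {X : Type*} [MetricSpace X] (φ : C(ℝ, X)) : Prop :=
  AlmostRecurrent φ ∧ LagrangeStable φ

/-- `φ` is Levitan almost periodic. -/
def LevitanAlmostPeriodic {X : Type*} [MetricSpace X] (φ : C(ℝ, X)) : Prop :=
  ∃ (Z : Type) (_ : MetricSpace Z) (_ : CompleteSpace Z) (χ : C(ℝ, Z)),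
    BohrAlmostPeriodic χ ∧
    ∀ ε > (0 : ℝ), ∃ δ > (0 : ℝ), ∀ τ : ℝ, IsAlmostPeriod χ δ τ →
      bebutovDist (timeShift φ τ) φ < ε

/-- `φ` is quasi-periodic with the spectrum of frequencies `ν₁,…,ν_k`. -/
def QuasiPeriodic {X : Type*} [MetricSpace X] (φ : C(ℝ, X)) {k : ℕ} (ν : Fin k → ℝ) :
    Prop :=
  LinearIndependent ℚ ν ∧
  ∃ Φ : C((Fin k → ℝ), X),
    (∀ v : Fin k → ℝ, Φ (fun i => v i + 2 * Real.pi) = Φ v) ∧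
    ∀ t : ℝ, φ t = Φ (fun i => ν i * t)

/-- `φ` is pseudo-periodic: for every `ε > 0` and `l > 0` there exist `ε`-almost
periods `τ₊ > l` and `τ₋ < −l`. -/
def PseudoPeriodic {X : Type*} [MetricSpace X] (φ : C(ℝ, X)) : Prop :=
  ∀ ε > (0 : ℝ), ∀ l > (0 : ℝ),
    (∃ τ : ℝ, l < τ ∧ IsAlmostPeriod φ ε τ) ∧
    (∃ τ : ℝ, τ < -l ∧ IsAlmostPeriod φ ε τ)

/-- `φ` is pseudo-recurrent. -/
def PseudoRecurrent {X : Type*} [MetricSpace X] (φ : C(ℝ, X)) : Prop :=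
  ∀ ε > (0 : ℝ), ∀ l : ℝ, ∃ L : ℝ, l ≤ L ∧ ∀ τ₀ : ℝ, ∃ τ ∈ Set.Icc l L,
    ∀ t : ℝ, |t| ≤ 1 / ε → dist (φ (t + τ₀ + τ)) (φ (t + τ₀)) ≤ ε

/-! If the `ε`-shifts of `φ` were not relatively dense, the relatively dense set of
`1/(n+1)`-shifts of `ψ` would contain, for each `n`, some `τₙ` with `d(φ^{τₙ}, φ) ≥ ε`.
Then `{τₙ} ∈ 𝔑_ψ ⊆ 𝔑_φ`, which is absurd. -/

lemma bebutovDist_nonneg {X : Type*} [MetricSpace X] (φ ψ : C(ℝ, X)) :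
    0 ≤ bebutovDist φ ψ := by
  refine Real.iSup_nonneg fun T => le_min (Real.iSup_nonneg fun _ => dist_nonneg) ?_
  have hT : (0 : ℝ) < T := T.2
  positivity

lemma RelativelyDense.mono {S T : Set ℝ} (hS : RelativelyDense S) (hST : S ⊆ T) :
    RelativelyDense T := by
  obtain ⟨l, hl, hSl⟩ := hS
  refine ⟨l, hl, fun a => ?_⟩
  obtain ⟨τ, hτS, hτa⟩ := hSl a
  exact ⟨τ, hST hτS, hτa⟩

lemma mem_nClass_of_bebutovDist_lt {X : Type*} [MetricSpace X] {φ : C(ℝ, X)} {t : ℕ → ℝ}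
    (ht : ∀ n : ℕ, bebutovDist (timeShift φ (t n)) φ < 1 / (n + 1)) : t ∈ NClass φ :=
  squeeze_zero (fun _ => bebutovDist_nonneg _ _) (fun n => (ht n).le)
    tendsto_one_div_add_atTop_nhds_zero_nat

lemma eventually_bebutovDist_lt_of_mem_nClass {X : Type*} [MetricSpace X] {φ : C(ℝ, X)}
    {t : ℕ → ℝ} (ht : t ∈ NClass φ) {ε : ℝ} (hε : 0 < ε) :
    ∀ᶠ n in atTop, bebutovDist (timeShift φ (t n)) φ < ε :=
  ht.eventually (gt_mem_nhds hε)

theorem almostRecurrent_of_comparable_general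
    {X Y : Type*} [MetricSpace X] [MetricSpace Y]
    (φ : C(ℝ, X)) (ψ : C(ℝ, Y)) (h : NClass ψ ⊆ NClass φ)
    (hψ : AlmostRecurrent ψ) : AlmostRecurrent φ := by
  intro ε hε
  by_contra hφ
  have hescape : ∀ n : ℕ, ∃ τ, bebutovDist (timeShift ψ τ) ψ < 1 / (n + 1) ∧
      ¬ bebutovDist (timeShift φ τ) φ < ε := fun n => by
    simpa [Set.not_subset] using fun hsub => hφ ((hψ _ Nat.one_div_pos_of_nat).mono hsub)
  choose t htψ htφ using hescape
  obtain ⟨n, hn⟩ :=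
    (eventually_bebutovDist_lt_of_mem_nClass (h (mem_nClass_of_bebutovDist_lt htψ)) hε).exists
  exact htφ n hn

/-- If `φ` is comparable by character of recurrence with `ψ` (`𝔑_ψ ⊆ 𝔑_φ`) and `ψ` is
almost recurrent in the sense of Bebutov, then so is `φ`. -/
theorem almostRecurrent_of_comparable
    {X Y : Type*} [MetricSpace X] [CompleteSpace X] [MetricSpace Y] [CompleteSpace Y]
    (φ : C(ℝ, X)) (ψ : C(ℝ, Y)) (h : NClass ψ ⊆ NClass φ)
    (hψ : AlmostRecurrent ψ) : AlmostRecurrent φ :=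
  almostRecurrent_of_comparable_general φ ψ h hψ
end

section
/- Let φ ∈ C(ℝ,X) be comparable by character of recurrence with ψ ∈ C(ℝ,Y). If ψ is Levitan almost periodic, then φ is Levitan almost periodic. -/
open Filter Topology

lemma exists_bebutovDist_timeShift_lt_of_nClass_subset {X Y : Type*} [MetricSpace X]
    [MetricSpace Y] {φ : C(ℝ, X)} {ψ : C(ℝ, Y)} (h : NClass ψ ⊆ NClass φ) {ε : ℝ} (hε : 0 < ε) :
    ∃ η > (0 : ℝ), ∀ τ : ℝ, bebutovDist (timeShift ψ τ) ψ < η →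
      bebutovDist (timeShift φ τ) φ < ε := by
  by_contra! hbad
  choose τ hψτ hφτ using fun n : ℕ => hbad (1 / ((n : ℝ) + 1)) Nat.one_div_pos_of_nat
  have hτ : τ ∈ NClass ψ :=
    squeeze_zero (fun _ => bebutovDist_nonneg _ _) (fun n => (hψτ n).le)
      tendsto_one_div_add_atTop_nhds_zero_nat
  obtain ⟨n, hn⟩ := ((h hτ).eventually (gt_mem_nhds hε)).exists
  exact (hφτ n).not_gt hn

theorem levitanAlmostPeriodic_of_comparable_general
    {X Y : Type*} [MetricSpace X] [MetricSpace Y]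
    (φ : C(ℝ, X)) (ψ : C(ℝ, Y)) (h : NClass ψ ⊆ NClass φ)
    (hψ : LevitanAlmostPeriodic ψ) : LevitanAlmostPeriodic φ := by
  obtain ⟨Z, _, _, χ, hχ, hψχ⟩ := hψ
  refine ⟨Z, ‹_›, ‹_›, χ, hχ, fun ε hε => ?_⟩
  obtain ⟨η, hη, hφψ⟩ := exists_bebutovDist_timeShift_lt_of_nClass_subset h hε
  obtain ⟨δ, hδ, hψδ⟩ := hψχ η hη
  exact ⟨δ, hδ, fun τ hτ => hφψ τ (hψδ τ hτ)⟩

/-- If `φ` is comparable by character of recurrence with `ψ` (`𝔑_ψ ⊆ 𝔑_φ`) and `ψ` is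
Levitan almost periodic, then so is `φ`. -/
theorem levitanAlmostPeriodic_of_comparable
    {X Y : Type*} [MetricSpace X] [CompleteSpace X] [MetricSpace Y] [CompleteSpace Y]
    (φ : C(ℝ, X)) (ψ : C(ℝ, Y)) (h : NClass ψ ⊆ NClass φ)
    (hψ : LevitanAlmostPeriodic ψ) : LevitanAlmostPeriodic φ :=
  levitanAlmostPeriodic_of_comparable_general φ ψ h hψ
end

section
/- Let φ ∈ C(ℝ,X) be uniformly comparable by character of recurrence with ψ ∈ C(ℝ,Y). If ψ is Bohr almost periodic, then φ is Bohr almost periodic. -/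
/-!
Suppose the `ε`-almost periods of `φ` are not relatively dense. Then there is a sequence `sₙ`
none of whose differences `sₙ - sₘ` (`m < n`) is an `ε`-almost period of `φ`. By Bochner's
criterion the translates of `ψ` are relatively compact in the sup metric, so along a
subsequence `ψ^{s_{kᵢ}}` converges uniformly and `τᵢ := s_{k_{i+1}} - s_{kᵢ}` is an ever better
uniform almost period of `ψ`. Pick `uᵢ` with `ρ(φ(uᵢ + τᵢ), φ(uᵢ)) ≥ ε`. After one more
extraction the sequence `u₀, u₀ + τ₀, u₁, u₁ + τ₁, …` lies in `𝔐_ψ ⊆ 𝔐_φ`, so `φ(uᵢ)` and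
`φ(uᵢ + τᵢ)` converge to the same limit: a contradiction.
-/

open Filter Topology

open Set
open scoped BoundedContinuousFunction

section Bebutov

variable {X : Type*} [MetricSpace X]

@[simp]
theorem timeShift_apply (φ : C(ℝ, X)) (h t : ℝ) : timeShift φ h t = φ (t + h) := rfl

theorem bddAbove_range_dist_Icc (f g : C(ℝ, X)) (T : ℝ) :
    BddAbove (range fun t : Icc (-T) T => dist (f t) (g t)) := by
  simpa only [image_eq_range] using
    isCompact_Icc.bddAbove_image (f.continuous.dist g.continuous).continuousOn

theorem bddAbove_range_bebutovDist (f g : C(ℝ, X)) :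
    BddAbove (range fun T : Ioi (0 : ℝ) =>
      min (⨆ t : Icc (-(T : ℝ)) T, dist (f t) (g t)) (1 / (T : ℝ))) := by
  obtain ⟨M, hM⟩ := bddAbove_range_dist_Icc f g 1
  refine ⟨max M 1, ?_⟩
  rintro _ ⟨⟨T, hT : 0 < T⟩, rfl⟩
  rcases le_total T 1 with hT1 | hT1
  · have : Nonempty (Icc (-T) T) := ⟨⟨0, by linarith, hT.le⟩⟩
    refine (min_le_left _ _).trans ((ciSup_le fun t => hM ?_).trans (le_max_left _ _))
    exact ⟨⟨t, by linarith [t.2.1], by linarith [t.2.2]⟩, rfl⟩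
  · exact (min_le_right _ _).trans ((div_le_one (by linarith)).2 hT1 |>.trans (le_max_right _ _))

theorem dist_apply_zero_le_bebutovDist (f g : C(ℝ, X)) :
    dist (f 0) (g 0) ≤ bebutovDist f g := by
  set c := dist (f 0) (g 0)
  set T := 1 / (c + 1)
  have hT : 0 < T := by positivity
  calc c ≤ min (⨆ t : Icc (-T) T, dist (f t) (g t)) (1 / T) :=
        le_min (le_ciSup (bddAbove_range_dist_Icc f g T) ⟨0, by linarith, hT.le⟩)
          (by rw [one_div_one_div]; linarith)
    _ ≤ bebutovDist f g := le_ciSup (bddAbove_range_bebutovDist f g) ⟨T, hT⟩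

theorem bebutovDist_le_of_forall_dist_le {f g : C(ℝ, X)} {c : ℝ} (hc : 0 ≤ c)
    (h : ∀ t, dist (f t) (g t) ≤ c) : bebutovDist f g ≤ c :=
  Real.iSup_le (fun _ => (min_le_left _ _).trans (Real.iSup_le (fun t => h t) hc)) hc

theorem exists_tendsto_apply_of_mem_MClass {φ : C(ℝ, X)} {t : ℕ → ℝ}
    (ht : t ∈ MClass φ) : ∃ x, Tendsto (fun n => φ (t n)) atTop (𝓝 x) := by
  obtain ⟨χ, hχ⟩ := ht
  refine ⟨χ 0, tendsto_iff_dist_tendsto_zero.2 <|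
    squeeze_zero (fun _ => dist_nonneg) (fun n => ?_) hχ⟩
  simpa using dist_apply_zero_le_bebutovDist (timeShift φ (t n)) χ

end Bebutov

section Interleave

variable {α β : Type*}

def interleave (a b : ℕ → α) (j : ℕ) : α :=
  if Even j then a (j / 2) else b (j / 2)

@[simp]
theorem interleave_two_mul (a b : ℕ → α) (i : ℕ) : interleave a b (2 * i) = a i := by
  simp [interleave]

@[simp]
theorem interleave_two_mul_add_one (a b : ℕ → α) (i : ℕ) :
    interleave a b (2 * i + 1) = b i := by
  simp [interleave, Nat.mul_add_div]

theorem comp_interleave (f : α → β) (a b : ℕ → α) :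
    f ∘ interleave a b = interleave (f ∘ a) (f ∘ b) := by
  funext j
  simp only [Function.comp_apply, interleave, apply_ite f]

theorem tendsto_interleave [TopologicalSpace α] {a b : ℕ → α} {x : α}
    (ha : Tendsto a atTop (𝓝 x)) (hb : Tendsto b atTop (𝓝 x)) :
    Tendsto (interleave a b) atTop (𝓝 x) :=
  (ha.comp (Nat.tendsto_div_const_atTop two_ne_zero)).if'
    (hb.comp (Nat.tendsto_div_const_atTop two_ne_zero))

end Interleave

theorem tendsto_dist_of_interleave_mem_MClass {X : Type*} [MetricSpace X] {φ : C(ℝ, X)}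
    {a b : ℕ → ℝ} (h : interleave a b ∈ MClass φ) :
    Tendsto (fun i => dist (φ (b i)) (φ (a i))) atTop (𝓝 0) := by
  obtain ⟨x, hx⟩ := exists_tendsto_apply_of_mem_MClass h
  have h2 : Tendsto (fun i : ℕ => 2 * i) atTop atTop := tendsto_id.const_mul_atTop' two_pos
  have ha := hx.comp h2
  have hb := hx.comp ((tendsto_add_atTop_nat 1).comp h2)
  simpa [Function.comp_def] using hb.dist ha

theorem exists_sub_notMem_of_not_relativelyDense {S : Set ℝ} (hS : ¬RelativelyDense S)
    (R : ℝ) : ∃ x, ∀ y, |y| ≤ R → x - y ∉ S := by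
  simp only [RelativelyDense, not_exists, not_and, not_forall] at hS
  obtain ⟨a, ha⟩ := hS (2 * |R| + 1) (by positivity)
  refine ⟨a + |R|, fun y hy hyS => ha _ hyS ⟨?_, ?_⟩⟩ <;>
    linarith [abs_le.1 hy, le_abs_self R]

theorem exists_seq_sub_notMem_of_not_relativelyDense {S : Set ℝ} (hS : ¬RelativelyDense S) :
    ∃ s : ℕ → ℝ, ∀ m n, m < n → s n - s m ∉ S := by
  choose x hx using exists_sub_notMem_of_not_relativelyDense hS
  -- `R n` bounds `|x (R m)|` for all `m < n`
  let R : ℕ → ℝ := fun n => Nat.rec 0 (fun _ r => max r |x r|) n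
  have hR : Monotone R := monotone_nat_of_le_succ fun n => le_max_left _ _
  exact ⟨fun n => x (R n), fun m n hmn => hx _ _ ((le_max_right _ _).trans (hR hmn))⟩

section AlmostPeriodic

variable {Y : Type*} [MetricSpace Y] {ψ : C(ℝ, Y)}

theorem BohrAlmostPeriodic.exists_add_mem_Icc (hψ : BohrAlmostPeriodic ψ) {ε : ℝ}
    (hε : 0 < ε) : ∃ l, ∀ x, ∃ τ, IsAlmostPeriod ψ ε τ ∧ x + τ ∈ Icc 0 l := by
  obtain ⟨l, -, hl⟩ := hψ ε hε
  refine ⟨l, fun x => ?_⟩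
  obtain ⟨τ, hτ, h₁, h₂⟩ := hl (-x)
  exact ⟨τ, hτ, by linarith, by linarith⟩

theorem BohrAlmostPeriodic.isBounded_range (hψ : BohrAlmostPeriodic ψ) :
    Bornology.IsBounded (range ψ) := by
  obtain ⟨l, hl⟩ := hψ.exists_add_mem_Icc one_pos
  have hK := (isCompact_Icc (a := 0) (b := l)).image ψ.continuous
  refine (hK.isBounded.cthickening (δ := 1)).subset ?_
  rintro _ ⟨x, rfl⟩
  obtain ⟨τ, hτ, hx⟩ := hl x
  exact Metric.mem_cthickening_of_dist_le _ _ _ _ (mem_image_of_mem ψ hx)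
    (dist_comm (ψ x) _ ▸ (hτ x).le)

theorem BohrAlmostPeriodic.uniformContinuous (hψ : BohrAlmostPeriodic ψ) :
    UniformContinuous ψ := by
  refine Metric.uniformContinuous_iff.2 fun ε hε => ?_
  obtain ⟨l, hl⟩ := hψ.exists_add_mem_Icc (ε := ε / 3) (by positivity)
  obtain ⟨δ, hδ, hδψ⟩ := Metric.uniformContinuousOn_iff.1
    ((isCompact_Icc (a := -1) (b := l + 1)).uniformContinuousOn_of_continuous
      ψ.continuous.continuousOn) (ε / 3) (by positivity)
  refine ⟨min δ 1, by positivity, fun {a b} hab => ?_⟩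
  obtain ⟨τ, hτ, ha₁, ha₂⟩ := hl a
  have hab' := abs_lt.1 (Real.dist_eq a b ▸ hab.trans_le (min_le_right _ _))
  have hmid : dist (ψ (a + τ)) (ψ (b + τ)) < ε / 3 :=
    hδψ _ ⟨by linarith, by linarith⟩ _ ⟨by linarith, by linarith⟩
      (by rw [Real.dist_eq, add_sub_add_right_eq_sub, ← Real.dist_eq]
          exact hab.trans_le (min_le_left _ _))
  calc dist (ψ a) (ψ b) ≤ dist (ψ a) (ψ (a + τ)) + dist (ψ (a + τ)) (ψ (b + τ)) +
        dist (ψ (b + τ)) (ψ b) := dist_triangle4 _ _ _ _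
    _ < ε / 3 + ε / 3 + ε / 3 := by
        rw [dist_comm (ψ a)]; gcongr; exacts [hτ a, hτ b]
    _ = ε := by ring

end AlmostPeriodic

section BoundedTimeShift

variable {Y : Type*} [MetricSpace Y] {ψ : C(ℝ, Y)}

def boundedTimeShift (ψ : C(ℝ, Y)) (hb : Bornology.IsBounded (range ψ)) (a : ℝ) :
    ℝ →ᵇ Y :=
  ⟨timeShift ψ a, by
    obtain ⟨C, hC⟩ := Metric.isBounded_iff.1 hb
    exact ⟨C, fun s t => hC (mem_range_self _) (mem_range_self _)⟩⟩

variable (hb : Bornology.IsBounded (range ψ))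
include hb

@[simp]
theorem boundedTimeShift_apply (a t : ℝ) : boundedTimeShift ψ hb a t = ψ (t + a) := rfl

theorem dist_boundedTimeShift_add_le (s a b : ℝ) :
    dist (boundedTimeShift ψ hb (s + a)) (boundedTimeShift ψ hb (s + b)) ≤
      dist (boundedTimeShift ψ hb a) (boundedTimeShift ψ hb b) :=
  (BoundedContinuousFunction.dist_le dist_nonneg).2 fun t => by
    simpa only [boundedTimeShift_apply, add_assoc] using
      (boundedTimeShift ψ hb a).dist_coe_le_dist (g := boundedTimeShift ψ hb b) (t + s)

theorem UniformContinuous.boundedTimeShift (hψ : UniformContinuous ψ) :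
    UniformContinuous (boundedTimeShift ψ hb) := by
  refine Metric.uniformContinuous_iff.2 fun ε hε => ?_
  obtain ⟨δ, hδ, hδψ⟩ := Metric.uniformContinuous_iff.1 hψ (ε / 2) (by positivity)
  refine ⟨δ, hδ, fun {a b} hab => ?_⟩
  refine ((BoundedContinuousFunction.dist_le (by positivity)).2 fun t => ?_).trans_lt
    (by linarith : ε / 2 < ε)
  exact (hδψ (by rwa [Real.dist_eq, add_sub_add_left_eq_sub, ← Real.dist_eq])).le

/-- One half of Bochner's criterion. -/
theorem BohrAlmostPeriodic.totallyBounded_range_boundedTimeShift (hψ : BohrAlmostPeriodic ψ) :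
    TotallyBounded (range (boundedTimeShift ψ hb)) := by
  refine Metric.totallyBounded_iff.2 fun ε hε => ?_
  obtain ⟨l, hl⟩ := hψ.exists_add_mem_Icc (ε := ε / 2) (by positivity)
  have hK : IsCompact (boundedTimeShift ψ hb '' Icc 0 l) :=
    isCompact_Icc.image (hψ.uniformContinuous.boundedTimeShift hb).continuous
  obtain ⟨F, hF, hKF⟩ := Metric.totallyBounded_iff.1 hK.totallyBounded (ε / 2) (by positivity)
  refine ⟨F, hF, ?_⟩
  rintro _ ⟨a, rfl⟩
  obtain ⟨τ, hτ, haτ⟩ := hl a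
  obtain ⟨y, hy, hτy⟩ := mem_iUnion₂.1 (hKF (mem_image_of_mem _ haτ))
  have ha : dist (boundedTimeShift ψ hb a) (boundedTimeShift ψ hb (a + τ)) ≤ ε / 2 :=
    (BoundedContinuousFunction.dist_le (by positivity)).2 fun t => by
      simpa only [boundedTimeShift_apply, dist_comm (ψ (t + a)), add_assoc] using (hτ (t + a)).le
  refine mem_iUnion₂.2 ⟨y, hy, ?_⟩
  rw [Metric.mem_ball] at hτy ⊢
  linarith [dist_triangle (boundedTimeShift ψ hb a) (boundedTimeShift ψ hb (a + τ)) y]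

theorem BohrAlmostPeriodic.exists_tendsto_boundedTimeShift_subseq [CompleteSpace Y]
    (hψ : BohrAlmostPeriodic ψ) (u : ℕ → ℝ) :
    ∃ q : ℕ → ℕ, StrictMono q ∧
      ∃ g, Tendsto (fun n => boundedTimeShift ψ hb (u (q n))) atTop (𝓝 g) := by
  have hK := (hψ.totallyBounded_range_boundedTimeShift hb).closure.isCompact_of_isClosed
    isClosed_closure
  obtain ⟨g, -, q, hq, hg⟩ := hK.tendsto_subseq fun n => subset_closure (mem_range_self (u n))
  exact ⟨q, hq, g, hg⟩

theorem mem_MClass_of_tendsto_boundedTimeShift {w : ℕ → ℝ} {g : ℝ →ᵇ Y}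
    (h : Tendsto (fun n => boundedTimeShift ψ hb (w n)) atTop (𝓝 g)) : w ∈ MClass ψ := by
  refine ⟨g, squeeze_zero (fun _ => dist_nonneg.trans (dist_apply_zero_le_bebutovDist _ _))
    (fun n => bebutovDist_le_of_forall_dist_le dist_nonneg fun t => ?_)
    (tendsto_iff_dist_tendsto_zero.1 h)⟩
  exact (boundedTimeShift ψ hb (w n)).dist_coe_le_dist t

theorem BohrAlmostPeriodic.exists_interleave_mem_MClass [CompleteSpace Y]
    (hψ : BohrAlmostPeriodic ψ) {a b : ℕ → ℝ}
    (hab : Tendsto (fun i => dist (boundedTimeShift ψ hb (b i)) (boundedTimeShift ψ hb (a i)))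
      atTop (𝓝 0)) :
    ∃ q : ℕ → ℕ, interleave (a ∘ q) (b ∘ q) ∈ MClass ψ := by
  obtain ⟨q, hq, g, hg⟩ := hψ.exists_tendsto_boundedTimeShift_subseq hb a
  refine ⟨q, mem_MClass_of_tendsto_boundedTimeShift hb (g := g) ?_⟩
  rw [← Function.comp_def (boundedTimeShift ψ hb), comp_interleave]
  refine tendsto_interleave hg (hg.congr_dist ?_)
  simpa only [dist_comm, Function.comp_def] using hab.comp hq.tendsto_atTop

end BoundedTimeShift

theorem exists_lt_isAlmostPeriod_sub_of_MClass_subset {X Y : Type*} [MetricSpace X]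
    [MetricSpace Y] [CompleteSpace Y] {φ : C(ℝ, X)} {ψ : C(ℝ, Y)}
    (h : MClass ψ ⊆ MClass φ)
    (hψ : BohrAlmostPeriodic ψ) {ε : ℝ} (hε : 0 < ε) (s : ℕ → ℝ) :
    ∃ m n, m < n ∧ IsAlmostPeriod φ ε (s n - s m) := by
  by_contra! hs
  have hb := hψ.isBounded_range
  set B := boundedTimeShift ψ hb
  obtain ⟨k, hk, g, hg⟩ := hψ.exists_tendsto_boundedTimeShift_subseq hb s
  have hu : ∀ i, ∃ u, ε ≤ dist (φ (u + (s (k (i + 1)) - s (k i)))) (φ u) := fun i => by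
    simpa [IsAlmostPeriod] using hs _ _ (hk i.lt_succ_self)
  choose u hu using hu
  have hclose : ∀ i, dist (B (u i + (s (k (i + 1)) - s (k i)))) (B (u i)) ≤
      dist (B (s (k (i + 1)))) (B (s (k i))) := fun i => by
    convert dist_boundedTimeShift_add_le hb (u i - s (k i)) _ _ using 3 <;> ring
  obtain ⟨q, hq⟩ := hψ.exists_interleave_mem_MClass hb
    (squeeze_zero (fun _ => dist_nonneg) hclose
      (by simpa using ((hg.comp (tendsto_add_atTop_nat 1)).dist hg)))
  obtain ⟨i, hi⟩ := ((tendsto_dist_of_interleave_mem_MClass (h hq)).eventually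
    (gt_mem_nhds hε)).exists
  exact (hu (q i)).not_gt hi

theorem bohrAlmostPeriodic_of_uniformly_comparable_general
    {X Y : Type*} [MetricSpace X] [MetricSpace Y] [CompleteSpace Y]
    (φ : C(ℝ, X)) (ψ : C(ℝ, Y)) (h : MClass ψ ⊆ MClass φ)
    (hψ : BohrAlmostPeriodic ψ) : BohrAlmostPeriodic φ := by
  intro ε hε
  by_contra hφ
  obtain ⟨s, hs⟩ := exists_seq_sub_notMem_of_not_relativelyDense hφ
  obtain ⟨m, n, hmn, hmn'⟩ := exists_lt_isAlmostPeriod_sub_of_MClass_subset h hψ hε s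
  exact hs m n hmn hmn'

/-- If `φ` is uniformly comparable by character of recurrence with `ψ` (`𝔐_ψ ⊆ 𝔐_φ`)
and `ψ` is Bohr almost periodic, then so is `φ`. -/
theorem bohrAlmostPeriodic_of_uniformly_comparable
    {X Y : Type*} [MetricSpace X] [CompleteSpace X] [MetricSpace Y] [CompleteSpace Y]
    (φ : C(ℝ, X)) (ψ : C(ℝ, Y)) (h : MClass ψ ⊆ MClass φ)
    (hψ : BohrAlmostPeriodic ψ) : BohrAlmostPeriodic φ :=
  bohrAlmostPeriodic_of_uniformly_comparable_general φ ψ h hψ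
end

section
/- Let φ ∈ C(ℝ,X) be uniformly comparable by character of recurrence with ψ ∈ C(ℝ,Y). If ψ is Lagrange stable, then φ is Lagrange stable. -/
open Filter Topology

theorem lagrangeStable_iff_forall_exists_strictMono_comp_mem_MClass {X : Type*}
    [MetricSpace X] (φ : C(ℝ, X)) :
    LagrangeStable φ ↔ ∀ t : ℕ → ℝ, ∃ k : ℕ → ℕ, StrictMono k ∧ t ∘ k ∈ MClass φ :=
  forall_congr' fun _ => ⟨fun ⟨k, φ', hk, hφ'⟩ => ⟨k, hk, φ', hφ'⟩,
    fun ⟨k, hk, φ', hφ'⟩ => ⟨k, φ', hk, hφ'⟩⟩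

theorem lagrangeStable_of_uniformly_comparable_general
    {X Y : Type*} [MetricSpace X] [MetricSpace Y]
    (φ : C(ℝ, X)) (ψ : C(ℝ, Y)) (h : MClass ψ ⊆ MClass φ)
    (hψ : LagrangeStable ψ) : LagrangeStable φ := by
  rw [lagrangeStable_iff_forall_exists_strictMono_comp_mem_MClass] at hψ ⊢
  exact fun t => (hψ t).imp fun _ ⟨hk, hψk⟩ => ⟨hk, h hψk⟩

/-- If `φ` is uniformly comparable by character of recurrence with `ψ` (`𝔐_ψ ⊆ 𝔐_φ`)
and `ψ` is Lagrange stable, then so is `φ`. -/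
theorem lagrangeStable_of_uniformly_comparable
    {X Y : Type*} [MetricSpace X] [CompleteSpace X] [MetricSpace Y] [CompleteSpace Y]
    (φ : C(ℝ, X)) (ψ : C(ℝ, Y)) (h : MClass ψ ⊆ MClass φ)
    (hψ : LagrangeStable ψ) : LagrangeStable φ :=
  lagrangeStable_of_uniformly_comparable_general φ ψ h hψ
end
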